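/- Solvability criterion for the singular terminal-value ODE (the punchline of the Remark after Theorem 4.14, the ODE analogue of Lemma 4.13): Let T > 0, let λ : [0,T) → [0,∞) be continuous with ∫_0^t λ(s) ds → +∞ as t → T⁻, let ξ : [0,T] → ℝ be bounded and continuously differentiable, and let A ∈ ℝ. Then there exists a continuous function y : [0,T] → ℝ, differentiable on [0,T), satisfying y′(t) = λ(t)·(e^{ξ(t) − y(t)} − 1) for all t ∈ [0,T) and y(T) = A, if and only if A = ξ(T). -/

import Mathlib

/-!
The substitution `x = exp y` turns the equation into the linear relaxation equation
`x' = λ (exp ξ - x)`. With `Λ' = λ`, the function `exp Λ * (x - M)` is nonincreasing wherever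
`exp ξ ≤ M`; since `Λ → ∞` at `T`, every solution eventually lies below any `M' > M`, and
symmetrically above, so every solution tends to `exp (ξ T)`. Continuity of `y` at `T` then
forces `y T = ξ T`. Conversely, variation of constants gives the positive solution
`x = exp (-Λ) * (1 + ∫ λ exp Λ exp ξ)`, and `log x`, set to `ξ T` at `T`, solves the problem.
-/

open MeasureTheory Filter Set Topology Real Function

theorem hasDerivWithinAt_integral_Ico {f : ℝ → ℝ} {a b t : ℝ}
    (hf : ContinuousOn f (Ico a b)) (ht : t ∈ Ico a b) :
    HasDerivWithinAt (fun u => ∫ s in a..u, f s) (f t) (Ico a b) t := by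
  obtain ⟨c, htc, hcb⟩ := exists_between ht.2
  have hfc : ContinuousOn f (Icc a c) := hf.mono (Icc_subset_Ico_right hcb)
  have htc' : t ∈ Icc a c := ⟨ht.1, htc.le⟩
  have : Fact (t ∈ Icc a c) := ⟨htc'⟩
  refine (intervalIntegral.integral_hasDerivWithinAt_right (s := Icc a c)
    ((hfc.mono (uIcc_of_le ht.1 ▸ Icc_subset_Icc_right htc.le)).intervalIntegrable)
    (hfc.stronglyMeasurableAtFilter_nhdsWithin measurableSet_Icc t)
    (hfc t htc')).mono_of_mem_nhdsWithin ?_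
  exact mem_nhdsWithin.2 ⟨Iio c, isOpen_Iio, htc, fun s hs => ⟨hs.2.1, hs.1.le⟩⟩

section Relaxation

variable {a b : ℝ} {lam Λ g x : ℝ → ℝ}

theorem eventually_lt_of_hasDerivWithinAt_relaxation (hab : a < b)
    (hΛ : ∀ t ∈ Ico a b, HasDerivWithinAt Λ (lam t) (Ico a b) t)
    (hlam : ∀ t ∈ Ico a b, 0 ≤ lam t) (hΛ_top : Tendsto Λ (𝓝[<] b) atTop)
    (hx : ∀ t ∈ Ico a b, HasDerivWithinAt x (lam t * (g t - x t)) (Ico a b) t)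
    {M M' : ℝ} (hg : ∀ᶠ t in 𝓝[<] b, g t ≤ M) (hM : M < M') :
    ∀ᶠ t in 𝓝[<] b, x t < M' := by
  obtain ⟨t₀, ht₀b, hgM⟩ := mem_nhdsLT_iff_exists_Ioo_subset.1 hg
  obtain ⟨t₁, ht₀₁, ht₁b⟩ := exists_between (max_lt hab ht₀b)
  have hsub : Ico t₁ b ⊆ Ico a b := Ico_subset_Ico_left ((le_max_left _ _).trans ht₀₁.le)
  have hderiv : ∀ t ∈ Ico t₁ b, HasDerivWithinAt (fun t => exp (Λ t) * (x t - M))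
      (lam t * exp (Λ t) * (g t - M)) (Ico a b) t := fun t ht =>
    ((hΛ t (hsub ht)).exp.mul ((hx t (hsub ht)).sub_const M)).congr_deriv (by ring)
  have hanti : AntitoneOn (fun t => exp (Λ t) * (x t - M)) (Ico t₁ b) := by
    refine antitoneOn_of_hasDerivWithinAt_nonpos (f' := fun t => lam t * exp (Λ t) * (g t - M))
      (convex_Ico t₁ b) (fun t ht => (hderiv t ht).continuousWithinAt.mono hsub)
      (fun t ht => ?_) (fun t ht => ?_) <;> simp only [interior_Ico] at ht ⊢
    · exact (hderiv t (Ioo_subset_Ico_self ht)).mono (Ioo_subset_Ico_self.trans hsub)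
    · have hgt : g t ≤ M := hgM ⟨(le_max_right _ _).trans_lt (ht₀₁.trans ht.1), ht.2⟩
      have := hlam t (hsub (Ioo_subset_Ico_self ht))
      exact mul_nonpos_of_nonneg_of_nonpos (by positivity) (by linarith)
  set C := exp (Λ t₁) * (x t₁ - M)
  have hdecay : Tendsto (fun t => C * exp (-Λ t)) (𝓝[<] b) (𝓝 0) := by
    simpa using (tendsto_exp_atBot.comp (tendsto_neg_atTop_atBot.comp hΛ_top)).const_mul C
  filter_upwards [hdecay.eventually (gt_mem_nhds (sub_pos.2 hM)), Ioo_mem_nhdsLT ht₁b]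
    with t hsmall ht
  have hle : exp (Λ t) * (x t - M) ≤ C := hanti ⟨le_rfl, ht₁b⟩ ⟨ht.1.le, ht.2⟩ ht.1.le
  have hx_le : x t - M ≤ C * exp (-Λ t) := by
    calc x t - M = exp (-Λ t) * (exp (Λ t) * (x t - M)) := by
          rw [← mul_assoc, ← exp_add, neg_add_cancel, exp_zero, one_mul]
      _ ≤ exp (-Λ t) * C := mul_le_mul_of_nonneg_left hle (exp_pos _).le
      _ = C * exp (-Λ t) := mul_comm _ _
  linarith

theorem tendsto_of_hasDerivWithinAt_relaxation (hab : a < b)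
    (hΛ : ∀ t ∈ Ico a b, HasDerivWithinAt Λ (lam t) (Ico a b) t)
    (hlam : ∀ t ∈ Ico a b, 0 ≤ lam t) (hΛ_top : Tendsto Λ (𝓝[<] b) atTop)
    (hx : ∀ t ∈ Ico a b, HasDerivWithinAt x (lam t * (g t - x t)) (Ico a b) t)
    {L : ℝ} (hg : Tendsto g (𝓝[<] b) (𝓝 L)) :
    Tendsto x (𝓝[<] b) (𝓝 L) := by
  refine tendsto_order.2 ⟨fun m hm => ?_, fun M' hM' => ?_⟩
  · obtain ⟨m', hmm', hm'L⟩ := exists_between hm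
    have hx_neg : ∀ t ∈ Ico a b,
        HasDerivWithinAt (-x) (lam t * ((-g) t - (-x) t)) (Ico a b) t := fun t ht =>
      (hx t ht).neg.congr_deriv (by simp only [Pi.neg_apply]; ring)
    have hg_neg : ∀ᶠ t in 𝓝[<] b, (-g) t ≤ -m' :=
      (hg.eventually (lt_mem_nhds hm'L)).mono fun t ht => neg_le_neg ht.le
    filter_upwards [eventually_lt_of_hasDerivWithinAt_relaxation hab hΛ hlam hΛ_top hx_neg
      hg_neg (neg_lt_neg hmm')] with t ht
    exact lt_of_neg_lt_neg ht
  · obtain ⟨M, hLM, hMM'⟩ := exists_between hM'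
    exact eventually_lt_of_hasDerivWithinAt_relaxation hab hΛ hlam hΛ_top hx
      ((hg.eventually (gt_mem_nhds hLM)).mono fun _ h => h.le) hMM'

theorem exists_pos_hasDerivWithinAt_relaxation
    (hΛ : ∀ t ∈ Ico a b, HasDerivWithinAt Λ (lam t) (Ico a b) t)
    (hlam_cont : ContinuousOn lam (Ico a b)) (hlam : ∀ t ∈ Ico a b, 0 ≤ lam t)
    (hg_cont : ContinuousOn g (Ico a b)) (hg : ∀ t ∈ Ico a b, 0 ≤ g t) :
    ∃ x : ℝ → ℝ, (∀ t ∈ Ico a b, 0 < x t) ∧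
      ∀ t ∈ Ico a b, HasDerivWithinAt x (lam t * (g t - x t)) (Ico a b) t := by
  have hf_cont : ContinuousOn (fun s => lam s * exp (Λ s) * g s) (Ico a b) :=
    (hlam_cont.mul (continuous_exp.comp_continuousOn
      fun t ht => (hΛ t ht).continuousWithinAt)).mul hg_cont
  set F := fun u => ∫ s in a..u, lam s * exp (Λ s) * g s
  refine ⟨fun t => exp (-Λ t) * (1 + F t), fun t ht => ?_, fun t ht => ?_⟩
  · have hF : 0 ≤ F t := intervalIntegral.integral_nonneg ht.1 fun s hs => by
      have hs' : s ∈ Ico a b := ⟨hs.1, hs.2.trans_lt ht.2⟩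
      have := hlam s hs'
      have := hg s hs'
      positivity
    positivity
  · refine ((hΛ t ht).neg.exp.mul
      ((hasDerivWithinAt_integral_Ico hf_cont ht).const_add 1)).congr_deriv ?_
    have h : exp (-Λ t) * exp (Λ t) = 1 := by rw [← exp_add, neg_add_cancel, exp_zero]
    linear_combination (lam t * g t) * h

end Relaxation

theorem hasDerivWithinAt_exp_of_logRelaxation {y : ℝ → ℝ} {s : Set ℝ} {t l ξ : ℝ}
    (hy : HasDerivWithinAt y (l * (exp (ξ - y t) - 1)) s t) :
    HasDerivWithinAt (fun u => exp (y u)) (l * (exp ξ - exp (y t))) s t := by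
  refine hy.exp.congr_deriv ?_
  rw [exp_sub]
  field_simp

theorem hasDerivWithinAt_log_of_relaxation {x : ℝ → ℝ} {s : Set ℝ} {t l ξ : ℝ}
    (hx : HasDerivWithinAt x (l * (exp ξ - x t)) s t) (hpos : 0 < x t) :
    HasDerivWithinAt (fun u => log (x u)) (l * (exp (ξ - log (x t)) - 1)) s t := by
  refine (hx.log hpos.ne').congr_deriv ?_
  rw [exp_sub, exp_log hpos]
  field_simp

theorem continuousOn_Icc_update_of_tendsto {β : Type*} [TopologicalSpace β] {f : ℝ → β}
    {a b : ℝ} {c : β} (hab : a < b) (hf : ContinuousOn f (Ico a b))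
    (hlim : Tendsto f (𝓝[<] b) (𝓝 c)) : ContinuousOn (update f b c) (Icc a b) := by
  intro t ht
  rcases ht.2.eq_or_lt with rfl | htb
  · rwa [continuousWithinAt_update_same, Icc_sdiff_right, nhdsWithin_Ico_eq_nhdsLT hab]
  · refine ((hf t ⟨ht.1, htb⟩).congr (fun u hu => update_of_ne hu.2.ne _ _)
      (update_of_ne htb.ne _ _)).mono_of_mem_nhdsWithin ?_
    exact mem_nhdsWithin.2 ⟨Iio b, isOpen_Iio, htb, fun u hu => ⟨hu.2.1, hu.1⟩⟩

theorem stmt_9_general (T : ℝ) (hT : 0 < T) (lam : ℝ → ℝ)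
    (hlam_cont : ContinuousOn lam (Set.Ico 0 T))
    (hlam_nonneg : ∀ t ∈ Set.Ico (0 : ℝ) T, 0 ≤ lam t)
    (hdiv : Tendsto (fun t => ∫ s in (0 : ℝ)..t, lam s) (nhdsWithin T (Set.Iio T)) atTop)
    (xi xi' : ℝ → ℝ)
    (hxi_deriv : ∀ t ∈ Set.Icc (0 : ℝ) T, HasDerivWithinAt xi (xi' t) (Set.Icc 0 T) t)
    (A : ℝ) :
    (∃ y : ℝ → ℝ, ContinuousOn y (Set.Icc 0 T) ∧
      (∀ t ∈ Set.Ico (0 : ℝ) T,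
        HasDerivWithinAt y (lam t * (Real.exp (xi t - y t) - 1)) (Set.Ico 0 T) t) ∧
      y T = A) ↔ A = xi T := by
  have hΛ := fun t (ht : t ∈ Ico 0 T) => hasDerivWithinAt_integral_Ico hlam_cont ht
  have hT_mem : T ∈ Icc 0 T := ⟨hT.le, le_rfl⟩
  have hxi_cont : ContinuousOn xi (Icc 0 T) := fun t ht => (hxi_deriv t ht).continuousWithinAt
  have hnhds : 𝓝[<] T ≤ 𝓝[Icc 0 T] T := nhdsWithin_le_of_mem (Icc_mem_nhdsLT hT)
  have hexp_xi : Tendsto (fun t => exp (xi t)) (𝓝[<] T) (𝓝 (exp (xi T))) :=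
    (continuous_exp.tendsto _).comp ((hxi_cont T hT_mem).mono_left hnhds)
  constructor
  · rintro ⟨y, hy_cont, hy, rfl⟩
    have hexp_y := tendsto_of_hasDerivWithinAt_relaxation hT hΛ hlam_nonneg hdiv
      (fun t ht => hasDerivWithinAt_exp_of_logRelaxation (hy t ht)) hexp_xi
    exact exp_injective (tendsto_nhds_unique
      ((continuous_exp.tendsto _).comp ((hy_cont T hT_mem).mono_left hnhds)) hexp_y)
  · rintro rfl
    obtain ⟨x, hx_pos, hx⟩ := exists_pos_hasDerivWithinAt_relaxation hΛ hlam_cont hlam_nonneg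
      (continuous_exp.comp_continuousOn (hxi_cont.mono Ico_subset_Icc_self))
      fun t _ => (exp_pos _).le
    have hy := fun t (ht : t ∈ Ico 0 T) =>
      hasDerivWithinAt_log_of_relaxation (hx t ht) (hx_pos t ht)
    have hlim : Tendsto (fun t => log (x t)) (𝓝[<] T) (𝓝 (xi T)) := by
      rw [← log_exp (xi T)]
      exact ((continuousAt_log (exp_pos (xi T)).ne').tendsto).comp
        (tendsto_of_hasDerivWithinAt_relaxation hT hΛ hlam_nonneg hdiv hx hexp_xi)
    have hupd : ∀ u ∈ Ico 0 T, update (fun t => log (x t)) T (xi T) u = log (x u) :=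
      fun u hu => update_of_ne hu.2.ne _ _
    refine ⟨_, continuousOn_Icc_update_of_tendsto hT (fun t ht => (hy t ht).continuousWithinAt)
      hlim, fun t ht => ?_, update_self ..⟩
    rw [hupd t ht]
    exact (hy t ht).congr hupd (hupd t ht)

/-- Solvability criterion for the singular terminal-value ODE
y′ = λ(e^{ξ−y} − 1) on [0,T) with y(T) = A: a continuous solution on [0,T],
differentiable on [0,T), exists if and only if A = ξ(T). -/
theorem stmt_9 (T : ℝ) (hT : 0 < T) (lam : ℝ → ℝ)
    (hlam_cont : ContinuousOn lam (Set.Ico 0 T))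
    (hlam_nonneg : ∀ t ∈ Set.Ico (0 : ℝ) T, 0 ≤ lam t)
    (hdiv : Tendsto (fun t => ∫ s in (0 : ℝ)..t, lam s) (nhdsWithin T (Set.Iio T)) atTop)
    (xi xi' : ℝ → ℝ)
    (hxibdd : ∃ K, ∀ t ∈ Set.Icc (0 : ℝ) T, |xi t| ≤ K)
    (hxi'cont : ContinuousOn xi' (Set.Icc 0 T))
    (hxi_deriv : ∀ t ∈ Set.Icc (0 : ℝ) T, HasDerivWithinAt xi (xi' t) (Set.Icc 0 T) t)
    (A : ℝ) :
    (∃ y : ℝ → ℝ, ContinuousOn y (Set.Icc 0 T) ∧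
      (∀ t ∈ Set.Ico (0 : ℝ) T,
        HasDerivWithinAt y (lam t * (Real.exp (xi t - y t) - 1)) (Set.Ico 0 T) t) ∧
      y T = A) ↔ A = xi T :=
  stmt_9_general T hT lam hlam_cont hlam_nonneg hdiv xi xi' hxi_deriv A
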